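/- Let X : K ← H and Y : H ← G be composable groupoid correspondences, and let U ⊆ X and V ⊆ Y be slices. Then U·V := {[x,y] ∈ X ∘_H Y : x ∈ U, y ∈ V, s(x) = r(y)} is a slice of the composite correspondence X ∘_H Y, and each point z ∈ U·V has a unique representation z = [x,y] with x ∈ U and y ∈ V. -/

import Mathlib

open Topology

/-- An étale topological groupoid, given by its arrow space `A` and object space `O`. -/
structure EtaleGroupoid (A O : Type) [TopologicalSpace A] [TopologicalSpace O] where
  r : A → O
  s : A → O
  unit : O → A
  mul : A → A → A
  inv : A → A
  r_unit : ∀ o, r (unit o) = o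
  s_unit : ∀ o, s (unit o) = o
  r_mul : ∀ g h, s g = r h → r (mul g h) = r g
  s_mul : ∀ g h, s g = r h → s (mul g h) = s h
  mul_assoc : ∀ g h k, s g = r h → s h = r k → mul (mul g h) k = mul g (mul h k)
  unit_mul : ∀ g, mul (unit (r g)) g = g
  mul_unit : ∀ g, mul g (unit (s g)) = g
  r_inv : ∀ g, r (inv g) = s g
  s_inv : ∀ g, s (inv g) = r g
  mul_inv : ∀ g, mul g (inv g) = unit (r g)
  inv_mul : ∀ g, mul (inv g) g = unit (s g)
  etale_r : IsLocalHomeomorph r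
  etale_s : IsLocalHomeomorph s
  continuous_mul : Continuous fun p : { p : A × A // s p.1 = r p.2 } => mul p.1.1 p.1.2
  continuous_inv : Continuous inv

variable {A O : Type} [TopologicalSpace A] [TopologicalSpace O]

/-- A right action of an étale groupoid on a topological space `X`. -/
structure RightAction (G : EtaleGroupoid A O) (X : Type) [TopologicalSpace X] where
  anchor : X → O
  act : X → A → X
  continuous_anchor : Continuous anchor
  continuous_act :
    Continuous fun p : { p : X × A // anchor p.1 = G.r p.2 } => act p.1.1 p.1.2
  anchor_act : ∀ x g, anchor x = G.r g → anchor (act x g) = G.s g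
  act_mul : ∀ x g h, anchor x = G.r g → G.s g = G.r h →
    act (act x g) h = act x (G.mul g h)
  act_unit : ∀ x, act x (G.unit (anchor x)) = x

/-- A left action of an étale groupoid on a topological space `X`. -/
structure LeftAction (G : EtaleGroupoid A O) (X : Type) [TopologicalSpace X] where
  anchor : X → O
  act : A → X → X
  continuous_anchor : Continuous anchor
  continuous_act :
    Continuous fun p : { p : A × X // G.s p.1 = anchor p.2 } => act p.1.1 p.1.2
  anchor_act : ∀ g x, G.s g = anchor x → anchor (act g x) = G.r g
  mul_act : ∀ g h x, G.s g = G.r h → G.s h = anchor x →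
    act g (act h x) = act (G.mul g h) x
  unit_act : ∀ x, act (G.unit (anchor x)) x = x

namespace RightAction

variable {G : EtaleGroupoid A O} {X : Type} [TopologicalSpace X]

/-- The map `(x, g) ↦ (x·g, x)` on the fibre product `X ×_{s,G⁰,r} G`. -/
def pairMap (ρ : RightAction G X) :
    { p : X × A // ρ.anchor p.1 = G.r p.2 } → X × X :=
  fun p => (ρ.act p.1.1 p.1.2, p.1.1)

/-- The action is *basic* if `pairMap` is a homeomorphism onto its image. -/
def IsBasic (ρ : RightAction G X) : Prop := Topology.IsEmbedding ρ.pairMap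

/-- The action is *free* if `pairMap` is injective. -/
def IsFree (ρ : RightAction G X) : Prop := Function.Injective ρ.pairMap

/-- The action is *proper* if `pairMap` is a proper map. -/
def IsProper (ρ : RightAction G X) : Prop := IsProperMap ρ.pairMap

/-- Two points are orbit equivalent if one is a translate of the other. -/
def OrbitRel (ρ : RightAction G X) (x y : X) : Prop :=
  ∃ g, ρ.anchor x = G.r g ∧ y = ρ.act x g

/-- The orbit space `X/G`, with the quotient topology. -/
def OrbitSpace (ρ : RightAction G X) : Type := Quot ρ.OrbitRel

instance (ρ : RightAction G X) : TopologicalSpace ρ.OrbitSpace :=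
  instTopologicalSpaceQuot

/-- The orbit space projection `p : X → X/G`. -/
def orbitMap (ρ : RightAction G X) : X → ρ.OrbitSpace := Quot.mk _

end RightAction

variable {AH OH : Type} [TopologicalSpace AH] [TopologicalSpace OH]

/-- A groupoid correspondence `X : H ← G`: commuting left `H`- and right `G`-actions
such that the right anchor map is a local homeomorphism and the right action is free
and proper. -/
structure Correspondence (H : EtaleGroupoid AH OH) (G : EtaleGroupoid A O)
    (X : Type) [TopologicalSpace X] where
  left : LeftAction H X
  right : RightAction G X
  sInv_left : ∀ h x, H.s h = left.anchor x →
    right.anchor (left.act h x) = right.anchor x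
  rInv_right : ∀ x g, right.anchor x = G.r g →
    left.anchor (right.act x g) = left.anchor x
  comm : ∀ h x g, H.s h = left.anchor x → right.anchor x = G.r g →
    left.act h (right.act x g) = right.act (left.act h x) g
  etale_s : IsLocalHomeomorph right.anchor
  free : right.IsFree
  proper : right.IsProper

namespace Correspondence

variable {H : EtaleGroupoid AH OH} {G : EtaleGroupoid A O}
  {X : Type} [TopologicalSpace X]

/-- The map `r_* : X/G → H⁰` induced by the left anchor map. -/
def rStar (C : Correspondence H G X) : C.right.OrbitSpace → OH :=
  Quot.lift C.left.anchor (by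
    rintro x y ⟨g, hg, rfl⟩
    exact (C.rInv_right x g hg).symm)

end Correspondence
section Composition

variable {A O AH OH AK OK : Type} [TopologicalSpace A] [TopologicalSpace O]
  [TopologicalSpace AH] [TopologicalSpace OH]
  [TopologicalSpace AK] [TopologicalSpace OK]
  {H : EtaleGroupoid AH OH} {G : EtaleGroupoid A O} {K : EtaleGroupoid AK OK}
  {X Y : Type} [TopologicalSpace X] [TopologicalSpace Y]

namespace Correspondence

/-- The orbit relation of the diagonal `G`-action `g·(x,y) = (x·g⁻¹, g·y)` on the
fibre product `X ×_{s,G⁰,r} Y` of correspondences `X : H ← G` and `Y : G ← K`. -/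
def diagRel (CX : Correspondence H G X) (CY : Correspondence G K Y) :
    { p : X × Y // CX.right.anchor p.1 = CY.left.anchor p.2 } →
      { p : X × Y // CX.right.anchor p.1 = CY.left.anchor p.2 } → Prop :=
  fun z z' => ∃ g, ∃ hg : CX.right.anchor z.1.1 = G.s g,
    z' = ⟨(CX.right.act z.1.1 (G.inv g), CY.left.act g z.1.2), by
      rw [CX.right.anchor_act _ _ (hg.trans (G.r_inv g).symm), G.s_inv,
        CY.left.anchor_act _ _ (hg.symm.trans z.2)]⟩

/-- The underlying space `X ∘_G Y` of the composite of two groupoid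
correspondences: the orbit space of the diagonal `G`-action. -/
def Comp (CX : Correspondence H G X) (CY : Correspondence G K Y) : Type :=
  Quot (diagRel CX CY)

instance (CX : Correspondence H G X) (CY : Correspondence G K Y) :
    TopologicalSpace (Comp CX CY) := instTopologicalSpaceQuot

/-- The class `[x,y] ∈ X ∘_G Y` of a pair `(x,y)` with `s x = r y`. -/
def compMk (CX : Correspondence H G X) (CY : Correspondence G K Y)
    (z : { p : X × Y // CX.right.anchor p.1 = CY.left.anchor p.2 }) :
    Comp CX CY :=
  Quot.mk _ z

/-- The right anchor map `s[x,y] = s y` of the composite correspondence. -/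
def compAnchorS (CX : Correspondence H G X) (CY : Correspondence G K Y) :
    Comp CX CY → OK :=
  Quot.lift (fun z => CY.right.anchor z.1.2) (by
    rintro z z' ⟨g, hg, rfl⟩
    exact (CY.sInv_left g z.1.2 (hg.symm.trans z.2)).symm)

/-- The left anchor map `r[x,y] = r x` of the composite correspondence. -/
def compAnchorR (CX : Correspondence H G X) (CY : Correspondence G K Y) :
    Comp CX CY → OH :=
  Quot.lift (fun z => CX.left.anchor z.1.1) (by
    rintro z z' ⟨g, hg, rfl⟩
    exact (CX.rInv_right z.1.1 (G.inv g) (hg.trans (G.r_inv g).symm)).symm)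

/-- The orbit relation of the right `K`-action `[x,y]·k = [x, y·k]` on the
composite `X ∘_G Y`, expressed via representatives. -/
def compRightRel (CX : Correspondence H G X) (CY : Correspondence G K Y) :
    Comp CX CY → Comp CX CY → Prop :=
  fun q q' => ∃ z : { p : X × Y // CX.right.anchor p.1 = CY.left.anchor p.2 },
    ∃ k, ∃ hk : CY.right.anchor z.1.2 = K.r k,
      q = compMk CX CY z ∧
      q' = compMk CX CY ⟨(z.1.1, CY.right.act z.1.2 k), by
        rw [CY.rInv_right _ _ hk]; exact z.2⟩

end Correspondence

end Composition
section Statement17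

open Correspondence

variable {A O AH OH AK OK : Type} [TopologicalSpace A] [TopologicalSpace O]
  [TopologicalSpace AH] [TopologicalSpace OH]
  [TopologicalSpace AK] [TopologicalSpace OK]
  {K : EtaleGroupoid AK OK} {H : EtaleGroupoid AH OH} {G : EtaleGroupoid A O}
  {X Y : Type} [TopologicalSpace X] [TopologicalSpace Y]

/-- A *slice* of a groupoid correspondence: an open subset on which both the
right anchor map `s` and the orbit projection `p` are injective. -/
def Correspondence.IsSlice (C : Correspondence K H X) (U : Set X) : Prop :=
  IsOpen U ∧ Set.InjOn C.right.anchor U ∧ Set.InjOn C.right.orbitMap U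

/-! ### Auxiliary lemmas -/

namespace EtaleGroupoid

theorem inv_unit' (G : EtaleGroupoid A O) (o : O) : G.inv (G.unit o) = G.unit o := by
  have h1 := G.mul_inv (G.unit o)
  have h2 := G.unit_mul (G.inv (G.unit o))
  rw [G.r_inv, G.s_unit] at h2
  rw [G.r_unit] at h1
  exact h2.symm.trans h1

theorem eq_inv' (G : EtaleGroupoid A O) (g x : A) (hsr : G.s g = G.r x)
    (hmul : G.mul g x = G.unit (G.r g)) : x = G.inv g := by
  have h1 : G.mul (G.mul (G.inv g) g) x = G.mul (G.inv g) (G.mul g x) :=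
    G.mul_assoc _ _ _ (G.s_inv g) hsr
  rw [G.inv_mul, hmul, hsr, G.unit_mul, ← G.s_inv g, G.mul_unit] at h1
  exact h1

theorem inv_inv' (G : EtaleGroupoid A O) (g : A) : G.inv (G.inv g) = g := by
  have := G.eq_inv' (G.inv g) g (G.s_inv g) (by rw [G.inv_mul, G.r_inv])
  exact this.symm

theorem inv_mul_rev' (G : EtaleGroupoid A O) (a b : A) (h : G.s a = G.r b) :
    G.inv (G.mul a b) = G.mul (G.inv b) (G.inv a) := by
  have hsr : G.s (G.mul a b) = G.r (G.mul (G.inv b) (G.inv a)) := by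
    rw [G.s_mul a b h, G.r_mul _ _ (by rw [G.s_inv, G.r_inv, h]), G.r_inv]
  have hmul : G.mul (G.mul a b) (G.mul (G.inv b) (G.inv a)) =
      G.unit (G.r (G.mul a b)) := by
    have e1 : G.mul (G.mul a b) (G.mul (G.inv b) (G.inv a)) =
        G.mul a (G.mul b (G.mul (G.inv b) (G.inv a))) :=
      G.mul_assoc a b _ h (by rw [G.r_mul _ _ (by rw [G.s_inv, G.r_inv, h]), G.r_inv])
    have e2 : G.mul b (G.mul (G.inv b) (G.inv a)) =
        G.mul (G.mul b (G.inv b)) (G.inv a) :=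
      (G.mul_assoc b (G.inv b) (G.inv a) (G.r_inv b).symm (by rw [G.s_inv, G.r_inv, h])).symm
    rw [e1, e2, G.mul_inv, ← h, ← G.r_inv a, G.unit_mul, G.mul_inv, G.r_mul a b h]
  exact (G.eq_inv' _ _ hsr hmul).symm

end EtaleGroupoid

namespace Correspondence

theorem diagRel_equivalence (CX : Correspondence K H X) (CY : Correspondence H G Y) :
    Equivalence (diagRel CX CY) := by
  constructor
  · rintro ⟨⟨x, y⟩, hz⟩
    refine ⟨H.unit (CX.right.anchor x), (H.s_unit _).symm, ?_⟩
    apply Subtype.ext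
    have h1 : CX.right.act x (H.inv (H.unit (CX.right.anchor x))) = x := by
      rw [H.inv_unit', CX.right.act_unit]
    have h2 : CY.left.act (H.unit (CX.right.anchor x)) y = y := by
      rw [hz, CY.left.unit_act]
    exact Prod.ext h1.symm h2.symm
  · rintro ⟨⟨x, y⟩, hz⟩ z' ⟨g, hg, rfl⟩
    have hrg : CX.right.anchor x = H.r (H.inv g) := by rw [H.r_inv]; exact hg
    refine ⟨H.inv g, ?_, ?_⟩
    · show CX.right.anchor (CX.right.act x (H.inv g)) = H.s (H.inv g)
      exact CX.right.anchor_act _ _ hrg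
    · apply Subtype.ext
      have e1 : CX.right.act (CX.right.act x (H.inv g)) (H.inv (H.inv g)) = x := by
        rw [H.inv_inv', CX.right.act_mul x (H.inv g) g hrg (H.s_inv g),
          H.inv_mul, ← hg, CX.right.act_unit]
      have e2 : CY.left.act (H.inv g) (CY.left.act g y) = y := by
        rw [CY.left.mul_act _ _ _ (H.s_inv g) (hg.symm.trans hz),
          H.inv_mul, ← hg, hz, CY.left.unit_act]
      exact Prod.ext e1.symm e2.symm
  · rintro ⟨⟨x, y⟩, hz⟩ z' z'' ⟨g, hg, rfl⟩ ⟨g', hg', rfl⟩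
    have hag : CX.right.anchor (CX.right.act x (H.inv g)) = H.r g :=
      (CX.right.anchor_act _ _ (by rw [H.r_inv]; exact hg)).trans (H.s_inv g)
    have hcond : H.s g' = H.r g := hg'.symm.trans hag
    refine ⟨H.mul g' g, ?_, ?_⟩
    · show CX.right.anchor x = H.s (H.mul g' g)
      rw [H.s_mul g' g hcond]; exact hg
    · apply Subtype.ext
      have e1 : CX.right.act (CX.right.act x (H.inv g)) (H.inv g') =
          CX.right.act x (H.inv (H.mul g' g)) := by
        rw [H.inv_mul_rev' g' g hcond,
          CX.right.act_mul x (H.inv g) (H.inv g') (by rw [H.r_inv]; exact hg)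
            (by rw [H.s_inv, H.r_inv, hcond])]
      have e2 : CY.left.act g' (CY.left.act g y) = CY.left.act (H.mul g' g) y :=
        CY.left.mul_act g' g y hcond (hg.symm.trans hz)
      exact Prod.ext e1 e2

theorem compMk_eq_iff (CX : Correspondence K H X) (CY : Correspondence H G Y)
    (z z' : { p : X × Y // CX.right.anchor p.1 = CY.left.anchor p.2 }) :
    compMk CX CY z = compMk CX CY z' ↔ diagRel CX CY z z' :=
  Quot.eq.trans (diagRel_equivalence CX CY).eqvGen_iff

theorem isOpenMap_pullback_fst {Z B O' : Type} [TopologicalSpace Z] [TopologicalSpace B]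
    [TopologicalSpace O'] {f : Z → O'} {h : B → O'}
    (hf : Continuous f) (hh : IsLocalHomeomorph h) :
    IsOpenMap (fun p : { p : Z × B // f p.1 = h p.2 } => p.1.1) := by
  intro Ω hΩ
  rw [isOpen_iff_forall_mem_open]
  rintro _ ⟨⟨⟨z, b⟩, hzb⟩, hmem, rfl⟩
  obtain ⟨Ω', hΩ'open, hΩ'⟩ := isOpen_induced_iff.mp hΩ
  have hmem' : (z, b) ∈ Ω' := by rw [← hΩ'] at hmem; exact hmem
  obtain ⟨P, W, hP, hW, hzP, hbW, hPW⟩ := isOpen_prod_iff.mp hΩ'open z b hmem'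
  obtain ⟨e, hbe, heq⟩ := hh b
  subst heq
  refine ⟨P ∩ f ⁻¹' (↑e '' (W ∩ e.source)), ?_, ?_, hzP, ⟨b, ⟨hbW, hbe⟩, hzb.symm⟩⟩
  · rintro z' ⟨hz'P, b', ⟨hb'W, hb'src⟩, hb'⟩
    refine ⟨⟨(z', b'), hb'.symm⟩, ?_, rfl⟩
    show _ ∈ Ω
    rw [← hΩ']
    exact hPW ⟨hz'P, hb'W⟩
  · exact hP.inter ((e.isOpen_image_of_subset_source (hW.inter e.open_source)
      Set.inter_subset_right).preimage hf)

theorem slice_rep_unique (CX : Correspondence K H X) (CY : Correspondence H G Y)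
    (U : Set X) (V : Set Y) (hU : CX.IsSlice U) (hV : CY.IsSlice V)
    (z z' : { p : X × Y // CX.right.anchor p.1 = CY.left.anchor p.2 })
    (hzU : z.1.1 ∈ U) (hzV : z.1.2 ∈ V) (hz'U : z'.1.1 ∈ U) (hz'V : z'.1.2 ∈ V)
    (h : compMk CX CY z = compMk CX CY z') : z = z' := by
  obtain ⟨g, hg, hz'⟩ := (compMk_eq_iff CX CY z z').mp h
  have h1 : z'.1.1 = CX.right.act z.1.1 (H.inv g) := by rw [hz']
  have h2 : z'.1.2 = CY.left.act g z.1.2 := by rw [hz']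
  have horb : CX.right.orbitMap z.1.1 = CX.right.orbitMap z'.1.1 :=
    Quot.sound ⟨H.inv g, by rw [H.r_inv]; exact hg, h1⟩
  have e1 : z.1.1 = z'.1.1 := hU.2.2 hzU hz'U horb
  have hsy : CY.right.anchor z'.1.2 = CY.right.anchor z.1.2 := by
    rw [h2]; exact CY.sInv_left g z.1.2 (hg.symm.trans z.2)
  have e2 : z.1.2 = z'.1.2 := hV.2.1 hzV hz'V hsy.symm
  exact Subtype.ext (Prod.ext e1 e2)

theorem compRightRel_equivalence (CX : Correspondence K H X) (CY : Correspondence H G Y) :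
    Equivalence (compRightRel CX CY) := by
  constructor
  · intro q
    obtain ⟨z, rfl⟩ := Quot.exists_rep q
    refine ⟨z, G.unit (CY.right.anchor z.1.2), (G.r_unit _).symm, rfl, ?_⟩
    exact congrArg (compMk CX CY)
      (Subtype.ext (Prod.ext rfl (CY.right.act_unit z.1.2).symm))
  · rintro q q' ⟨z, k, hk, hq, hq'⟩
    have hk2 : CY.right.anchor (CY.right.act z.1.2 k) = G.s k := CY.right.anchor_act _ _ hk
    refine ⟨⟨(z.1.1, CY.right.act z.1.2 k), by rw [CY.rInv_right _ _ hk]; exact z.2⟩,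
      G.inv k, by rw [G.r_inv]; exact hk2, hq', ?_⟩
    rw [hq]
    apply congrArg (compMk CX CY)
    apply Subtype.ext
    refine Prod.ext rfl ?_
    show z.1.2 = CY.right.act (CY.right.act z.1.2 k) (G.inv k)
    rw [CY.right.act_mul _ _ _ hk (G.r_inv k).symm, G.mul_inv, ← hk, CY.right.act_unit]
  · rintro q q' q'' ⟨z, k, hk, hq, hq'⟩ ⟨z₁, k₁, hk₁, hq₁', hq''⟩
    obtain ⟨h, hh, hz₁⟩ := (compMk_eq_iff CX CY _ z₁).mp (hq'.symm.trans hq₁')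
    set w := CY.right.act z.1.2 k with hwdef
    have hLw : CY.left.anchor w = CX.right.anchor z.1.1 :=
      (CY.rInv_right z.1.2 k hk).trans z.2.symm
    have hcond : H.s h = CY.left.anchor w := hh.symm.trans hLw.symm
    have hw : CY.right.anchor w = G.r k₁ := by
      have h2 := hk₁
      rw [hz₁] at h2
      rw [← CY.sInv_left h w hcond]
      exact h2
    have hsk1 : G.s k = G.r k₁ := (CY.right.anchor_act z.1.2 k hk).symm.trans hw
    refine ⟨z, G.mul k k₁, by rw [G.r_mul k k₁ hsk1]; exact hk, hq, ?_⟩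
    rw [hq'']
    have e1 : z₁.1.1 = CX.right.act z.1.1 (H.inv h) := by rw [hz₁]
    have e2 : CY.right.act z₁.1.2 k₁ =
        CY.left.act h (CY.right.act z.1.2 (G.mul k k₁)) := by
      rw [hz₁, ← CY.right.act_mul z.1.2 k k₁ hk hsk1]
      exact (CY.comm h w k₁ hcond hw).symm
    have hrel : diagRel CX CY
        ⟨(z.1.1, CY.right.act z.1.2 (G.mul k k₁)), by
          rw [CY.rInv_right _ _ (by rw [G.r_mul k k₁ hsk1]; exact hk)]; exact z.2⟩
        ⟨(z₁.1.1, CY.right.act z₁.1.2 k₁), by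
          rw [CY.rInv_right _ _ hk₁]; exact z₁.2⟩ := by
      refine ⟨h, hh, ?_⟩
      exact Subtype.ext (Prod.ext e1 e2)
    exact (compMk_eq_iff CX CY _ _).mpr ((diagRel_equivalence CX CY).symm hrel)

end Correspondence

/-- For composable groupoid correspondences `X : K ← H`, `Y : H ← G` and slices
`U ⊆ X`, `V ⊆ Y`, the set `U·V = {[x,y] : x ∈ U, y ∈ V, s x = r y}` is a slice
of the composite `X ∘_H Y` (open, with the composite's right anchor map and
orbit projection injective on it), and every `z ∈ U·V` has a unique
representation `z = [x,y]` with `x ∈ U`, `y ∈ V`. -/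
theorem slice_mul_slice
    (CX : Correspondence K H X) (CY : Correspondence H G Y)
    (U : Set X) (V : Set Y) (hU : CX.IsSlice U) (hV : CY.IsSlice V) :
    (IsOpen { q : Comp CX CY |
        ∃ z : { p : X × Y // CX.right.anchor p.1 = CY.left.anchor p.2 },
          z.1.1 ∈ U ∧ z.1.2 ∈ V ∧ q = compMk CX CY z } ∧
      Set.InjOn (compAnchorS CX CY)
        { q | ∃ z, z.1.1 ∈ U ∧ z.1.2 ∈ V ∧ q = compMk CX CY z } ∧
      Set.InjOn (Quot.mk (compRightRel CX CY))
        { q | ∃ z, z.1.1 ∈ U ∧ z.1.2 ∈ V ∧ q = compMk CX CY z }) ∧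
    (∀ z z' : { p : X × Y // CX.right.anchor p.1 = CY.left.anchor p.2 },
      z.1.1 ∈ U → z.1.2 ∈ V → z'.1.1 ∈ U → z'.1.2 ∈ V →
      compMk CX CY z = compMk CX CY z' → z = z') := by
  refine ⟨⟨?_, ?_, ?_⟩, fun z z' hzU hzV hz'U hz'V h =>
    slice_rep_unique CX CY U V hU hV z z' hzU hzV hz'U hz'V h⟩
  · -- openness
    refine isQuotientMap_quot_mk.isOpen_preimage.mp ?_
    have cX : Continuous fun q : { p : { p : X × Y //
          CX.right.anchor p.1 = CY.left.anchor p.2 } × AH //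
          CX.right.anchor p.1.1.1 = H.s p.2 } => q.1.1.1.1 :=
      continuous_fst.comp (continuous_subtype_val.comp
        (continuous_fst.comp continuous_subtype_val))
    have cY : Continuous fun q : { p : { p : X × Y //
          CX.right.anchor p.1 = CY.left.anchor p.2 } × AH //
          CX.right.anchor p.1.1.1 = H.s p.2 } => q.1.1.1.2 :=
      continuous_snd.comp (continuous_subtype_val.comp
        (continuous_fst.comp continuous_subtype_val))
    have cg : Continuous fun q : { p : { p : X × Y //
          CX.right.anchor p.1 = CY.left.anchor p.2 } × AH //
          CX.right.anchor p.1.1.1 = H.s p.2 } => q.1.2 :=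
      continuous_snd.comp continuous_subtype_val
    have c1 : Continuous fun q : { p : { p : X × Y //
          CX.right.anchor p.1 = CY.left.anchor p.2 } × AH //
          CX.right.anchor p.1.1.1 = H.s p.2 } =>
        CX.right.act q.1.1.1.1 (H.inv q.1.2) :=
      CX.right.continuous_act.comp (Continuous.subtype_mk
        (cX.prodMk (H.continuous_inv.comp cg))
        (fun q => by
          show CX.right.anchor q.1.1.1.1 = H.r (H.inv q.1.2)
          rw [H.r_inv]; exact q.2))
    have c2 : Continuous fun q : { p : { p : X × Y //
          CX.right.anchor p.1 = CY.left.anchor p.2 } × AH //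
          CX.right.anchor p.1.1.1 = H.s p.2 } =>
        CY.left.act q.1.2 q.1.1.1.2 :=
      CY.left.continuous_act.comp (Continuous.subtype_mk
        (cg.prodMk cY) (fun q => q.2.symm.trans q.1.1.2))
    have hset : Quot.mk (diagRel CX CY) ⁻¹' { q : Comp CX CY |
          ∃ z : { p : X × Y // CX.right.anchor p.1 = CY.left.anchor p.2 },
            z.1.1 ∈ U ∧ z.1.2 ∈ V ∧ q = compMk CX CY z } =
        (fun q : { p : { p : X × Y //
            CX.right.anchor p.1 = CY.left.anchor p.2 } × AH //
            CX.right.anchor p.1.1.1 = H.s p.2 } => q.1.1) ''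
          ((fun q : { p : { p : X × Y //
              CX.right.anchor p.1 = CY.left.anchor p.2 } × AH //
              CX.right.anchor p.1.1.1 = H.s p.2 } =>
              (CX.right.act q.1.1.1.1 (H.inv q.1.2),
                CY.left.act q.1.2 q.1.1.1.2)) ⁻¹' (U ×ˢ V)) := by
      ext z'
      constructor
      · rintro ⟨z, hzU, hzV, hmk⟩
        obtain ⟨g, hg, hzeq⟩ := (compMk_eq_iff CX CY z' z).mp hmk
        refine ⟨⟨(z', g), hg⟩, ?_, rfl⟩
        show (CX.right.act z'.1.1 (H.inv g), CY.left.act g z'.1.2) ∈ U ×ˢ V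
        constructor
        · have h1 := hzU; rw [hzeq] at h1; exact h1
        · have h2 := hzV; rw [hzeq] at h2; exact h2
      · rintro ⟨q, hq, rfl⟩
        refine ⟨⟨(CX.right.act q.1.1.1.1 (H.inv q.1.2),
            CY.left.act q.1.2 q.1.1.1.2), by
          rw [CX.right.anchor_act _ _ (q.2.trans (H.r_inv q.1.2).symm), H.s_inv,
            CY.left.anchor_act _ _ (q.2.symm.trans q.1.1.2)]⟩, hq.1, hq.2, ?_⟩
        exact Quot.sound ⟨q.1.2, q.2, rfl⟩
    refine (congrArg IsOpen hset).mpr ?_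
    exact isOpenMap_pullback_fst
      (CX.right.continuous_anchor.comp (continuous_fst.comp continuous_subtype_val))
      H.etale_s _ (((hU.1.prod hV.1).preimage (c1.prodMk c2)))
  · -- InjOn compAnchorS
    rintro q ⟨z, hzU, hzV, rfl⟩ q' ⟨z', hz'U, hz'V, rfl⟩ hs
    have e2 : z.1.2 = z'.1.2 := hV.2.1 hzV hz'V hs
    have e1 : z.1.1 = z'.1.1 := hU.2.1 hzU hz'U (by rw [z.2, z'.2, e2])
    exact congrArg (compMk CX CY) (Subtype.ext (Prod.ext e1 e2))
  · -- InjOn the right orbit projection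
    rintro q ⟨z, hzU, hzV, rfl⟩ q' ⟨z', hz'U, hz'V, rfl⟩ hq
    have hrel : compRightRel CX CY (compMk CX CY z) (compMk CX CY z') :=
      ((compRightRel_equivalence CX CY).eqvGen_iff).mp (Quot.eq.mp hq)
    obtain ⟨z₀, k, hk, h₀, h₁⟩ := hrel
    obtain ⟨h, hh, hz⟩ := (compMk_eq_iff CX CY z₀ z).mp h₀.symm
    have hy : z.1.2 = CY.left.act h z₀.1.2 := by rw [hz]
    have hx : z.1.1 = CX.right.act z₀.1.1 (H.inv h) := by rw [hz]
    have hcond0 : H.s h = CY.left.anchor z₀.1.2 := hh.symm.trans z₀.2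
    have hk2 : CY.right.anchor z.1.2 = G.r k := by
      rw [hy, CY.sInv_left h z₀.1.2 hcond0]; exact hk
    have key : compMk CX CY z' = compMk CX CY ⟨(z.1.1, CY.right.act z.1.2 k), by
        rw [CY.rInv_right _ _ hk2]; exact z.2⟩ := by
      rw [h₁]
      apply (compMk_eq_iff CX CY _ _).mpr
      refine ⟨h, hh, ?_⟩
      have e2' : CY.right.act z.1.2 k =
          CY.left.act h (CY.right.act z₀.1.2 k) := by
        rw [hy]
        exact (CY.comm h z₀.1.2 k hcond0 hk).symm
      exact Subtype.ext (Prod.ext hx e2')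
    obtain ⟨g', hg', hz'eq⟩ := (compMk_eq_iff CX CY _ z').mp key.symm
    have hx' : z'.1.1 = CX.right.act z.1.1 (H.inv g') := by rw [hz'eq]
    have horb : CX.right.orbitMap z.1.1 = CX.right.orbitMap z'.1.1 :=
      Quot.sound ⟨H.inv g', by rw [H.r_inv]; exact hg', hx'⟩
    have e1 : z.1.1 = z'.1.1 := hU.2.2 hzU hz'U horb
    have hfix : CX.right.act z.1.1 (H.inv g') = z.1.1 := hx'.symm.trans e1.symm
    have hpair : CX.right.pairMap ⟨(z.1.1, H.inv g'), by rw [H.r_inv]; exact hg'⟩ =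
        CX.right.pairMap ⟨(z.1.1, H.unit (CX.right.anchor z.1.1)),
          (H.r_unit _).symm⟩ := by
      show (CX.right.act z.1.1 (H.inv g'), z.1.1) =
        (CX.right.act z.1.1 (H.unit (CX.right.anchor z.1.1)), z.1.1)
      rw [hfix, CX.right.act_unit]
    have hinv : H.inv g' = H.unit (CX.right.anchor z.1.1) :=
      congrArg (fun p => p.2) (congrArg Subtype.val (CX.free hpair))
    have hg'unit : g' = H.unit (CX.right.anchor z.1.1) := by
      have h3 := congrArg H.inv hinv
      rw [H.inv_inv', H.inv_unit'] at h3
      exact h3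
    have hy' : z'.1.2 = CY.right.act z.1.2 k := by
      rw [hz'eq]
      show CY.left.act g' (CY.right.act z.1.2 k) = CY.right.act z.1.2 k
      have hanch : CY.left.anchor (CY.right.act z.1.2 k) = CX.right.anchor z.1.1 := by
        rw [CY.rInv_right _ _ hk2]; exact z.2.symm
      rw [hg'unit, ← hanch, CY.left.unit_act]
    have horbY : CY.right.orbitMap z.1.2 = CY.right.orbitMap z'.1.2 :=
      Quot.sound ⟨k, hk2, hy'⟩
    have e2 : z.1.2 = z'.1.2 := hV.2.2 hzV hz'V horbY
    exact congrArg (compMk CX CY) (Subtype.ext (Prod.ext e1 e2))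

end Statement17
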